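/- Let S = ℕA and ρ a ray appearing in the non-left-Noetherian construction: assume codim τ_m > 1 and ρ ⊆ (⋂_{τ_i ⊋ τ_m, b_i − b_m ∈ Kτ_i} τ_i) \ (τ_m \ {0}), with d_ρ ∈ ℕ(A∩ρ) fixed. Then for all sufficiently large k: (1) b_m + k·d_ρ ∈ S + ℤ(A∩τ_m); and (2) for every i with τ_i ⊋ τ_m and b_i − b_m ∈ Kτ_i, b_i + k·d_ρ ∉ S + ℤ(A∩τ_i). -/

import Mathlib

open Function

/-- Lattice `ℤ^d`. -/
abbrev Zd (d : ℕ) := Fin d → ℤ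

noncomputable section

namespace SaitoTakahashi

variable {d : ℕ}

/-- The affine semigroup `ℕA` generated by the finite set `A ⊆ ℤ^d`. -/
def NA (A : Finset (Zd d)) : AddSubmonoid (Zd d) := AddSubmonoid.closure (A : Set (Zd d))

/-- The group `ℤA` generated by `A`. -/
def ZA (A : Finset (Zd d)) : AddSubgroup (Zd d) := AddSubgroup.closure (A : Set (Zd d))

/-- Realification of a lattice point. -/
def toR (a : Zd d) : Fin d → ℝ := fun i => (a i : ℝ)

/-- The real cone `ℝ≥0 A`. -/
def coneOf (A : Finset (Zd d)) : Set (Fin d → ℝ) :=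
  { x | ∃ c : Zd d → ℝ, (∀ a, 0 ≤ c a) ∧ x = ∑ a ∈ A, c a • toR a }

/-- The cone `ℝ≥0 A` is strongly convex. -/
def StronglyConvex (A : Finset (Zd d)) : Prop :=
  ∀ x ∈ coneOf A, -x ∈ coneOf A → x = 0

/-- `B = A ∩ τ` for a face `τ` of the cone `ℝ≥0 A`, i.e. `B` is the subset of `A`
cut out by an integral supporting functional which is nonnegative on `A`. -/
def IsFace (A B : Finset (Zd d)) : Prop :=
  ∃ G : Zd d →+ ℤ, B ⊆ A ∧ (∀ a ∈ A, 0 ≤ G a) ∧ ∀ a ∈ A, (G a = 0 ↔ a ∈ B)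

/-- `F` is the primitive integral support function of a facet of `ℝ≥0 A`:
nonnegative on the cone, surjective onto `ℤ` (primitivity, using `ℤA = ℤ^d`),
and its zero set in the cone is a face of dimension `d - 1`. -/
def IsFacetFn (A : Finset (Zd d)) (F : Zd d →+ ℤ) : Prop :=
  (∀ a ∈ A, 0 ≤ F a) ∧ Surjective F ∧
    Module.finrank ℝ ↥(Submodule.span ℝ (toR '' {a : Zd d | a ∈ A ∧ F a = 0})) = d - 1

/-- The set `A ∩ σ` for the facet with primitive integral support function `F`. -/
def facetSet (A : Finset (Zd d)) (F : Zd d →+ ℤ) : Finset (Zd d) :=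
  A.filter fun a => F a = 0

/-- `S` is an `ℕA`-set: `S + ℕA ⊆ S`. -/
def IsNASet (A : Finset (Zd d)) (S : Set (Zd d)) : Prop :=
  ∀ s ∈ S, ∀ a ∈ NA A, s + a ∈ S

/-- `S` is a finitely generated `ℕA`-set. -/
def IsFGNASet (A : Finset (Zd d)) (S : Set (Zd d)) : Prop :=
  IsNASet A S ∧ ∃ G : Finset (Zd d), S = { x | ∃ g ∈ G, ∃ a ∈ NA A, x = g + a }

/-- `S` is scored: `S = ⋂_{σ facet} { a ∈ ℤ^d : F_σ(a) ∈ F_σ(S) }`. -/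
def IsScored (A : Finset (Zd d)) (S : Set (Zd d)) : Prop :=
  S = { x : Zd d | ∀ F : Zd d →+ ℤ, IsFacetFn A F → F x ∈ F '' S }

/-- `S + ℤ(A ∩ τ)` where `B = A ∩ τ`. -/
def plusZ (S : Set (Zd d)) (B : Finset (Zd d)) : Set (Zd d) :=
  { x | ∃ s ∈ S, ∃ z ∈ AddSubgroup.closure (B : Set (Zd d)), x = s + z }

/-- The coset `b + ℤ(A ∩ τ)` where `B = A ∩ τ`. -/
def coset (b : Zd d) (B : Finset (Zd d)) : Set (Zd d) :=
  { x | x - b ∈ AddSubgroup.closure (B : Set (Zd d)) }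

/-- The standard-expression setting of the paper:
`S = S_c \ ⋃ᵢ (bᵢ + ℤ(A∩τᵢ))`, where `S_c` is a finitely generated scored
`ℕA`-set (the scored closure of `S`), `bᵢ ∈ S_c`, the `τᵢ` are faces of `ℝ≥0 A`
(encoded by `Bf i = A ∩ τᵢ`), and `F_σ(S) = F_σ(S_c)` for every facet `σ`. -/
structure Setting (A : Finset (Zd d)) (Sc S : Set (Zd d)) {m : ℕ}
    (b : Fin m → Zd d) (Bf : Fin m → Finset (Zd d)) : Prop where
  latt : ZA A = ⊤
  convex : StronglyConvex A
  fg : IsFGNASet A Sc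
  scored : IsScored A Sc
  bIn : ∀ i, b i ∈ Sc
  face : ∀ i, IsFace A (Bf i)
  expr : S = Sc \ ⋃ i, coset (b i) (Bf i)
  sameF : ∀ F : Zd d →+ ℤ, IsFacetFn A F → F '' S = F '' Sc

/-- The expression `S = S_c \ ⋃ᵢ (bᵢ + ℤ(A∩τᵢ))` is irredundant. -/
def Irredundant (Sc S : Set (Zd d)) {m : ℕ}
    (b : Fin m → Zd d) (Bf : Fin m → Finset (Zd d)) : Prop :=
  ∀ i, Sc \ ⋃ j, ⋃ (_ : j ≠ i), coset (b j) (Bf j) ≠ S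

section Kside

variable (K : Type) [Field K]

/-- A lattice point as a point of `K^d`. -/
def toK (a : Zd d) : Fin d → K := fun i => (a i : K)

/-- The vanishing ideal `𝕀(V) ⊆ K[s₁,…,s_d]` of a subset `V ⊆ K^d`. -/
def vIdeal (V : Set (Fin d → K)) : Ideal (MvPolynomial (Fin d) K) :=
  ⨅ v ∈ V, RingHom.ker (MvPolynomial.eval v)

/-- `Ω_{S,S'}(a) = S \ (−a + S')`. -/
def Omega (S S' : Set (Zd d)) (a : Zd d) : Set (Zd d) := S \ { x | a + x ∈ S' }

/-- The `K`-algebra map `f(s) ↦ f(s − c)`. -/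
def shiftHom (c : Fin d → K) : MvPolynomial (Fin d) K →+* MvPolynomial (Fin d) K :=
  MvPolynomial.eval₂Hom MvPolynomial.C (fun i => MvPolynomial.X i - MvPolynomial.C (c i))

/-- The translate `I + c = { f(s − c) : f ∈ I }` of an ideal of `K[s]`. -/
def shiftIdeal (I : Ideal (MvPolynomial (Fin d) K)) (c : Fin d → K) :
    Ideal (MvPolynomial (Fin d) K) :=
  I.map (shiftHom K c)

/-- The `K`-span `Kτ` of a face, where `B = A ∩ τ`. -/
def spanK (B : Finset (Zd d)) : Submodule K (Fin d → K) :=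
  Submodule.span K (toK K '' (B : Set (Zd d)))

/-- `lam` is (a representative of) an element of `E(S)_τ(α)`:
`lam ∈ Kτ` and `α − lam ∈ S + ℤ(A∩τ)`, where `B = A ∩ τ`. -/
def memE (S : Set (Zd d)) (B : Finset (Zd d)) (α lam : Fin d → K) : Prop :=
  lam ∈ spanK K B ∧
    ∃ s ∈ S, ∃ z ∈ AddSubgroup.closure (B : Set (Zd d)), α - lam = toK K s + toK K z

/-- The `K`-linear extension of an integral linear form `F` to `K^d`. -/
def FK (F : Zd d →+ ℤ) (v : Fin d → K) : K :=
  ∑ i, ((F (Pi.single i 1) : ℤ) : K) * v i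

/-- The affine translate `α + Kτ ⊆ K^d`, where `B = A ∩ τ`. -/
def aff (α : Fin d → K) (B : Finset (Zd d)) : Set (Fin d → K) :=
  { x | ∃ lam ∈ spanK K B, x = α + lam }

end Kside

end SaitoTakahashi

namespace SaitoTakahashi

lemma toR_mem_span {d : ℕ} {s : Finset (Zd d)} {v : Zd d}
    (hv : v ∈ AddSubgroup.closure (s : Set (Zd d))) :
    toR v ∈ Submodule.span ℝ (toR '' (s : Set (Zd d))) := by
  induction hv using AddSubgroup.closure_induction with
  | mem a ha => exact Submodule.subset_span ⟨a, ha, rfl⟩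
  | zero =>
      have : toR (0 : Zd d) = 0 := by funext i; simp [toR]
      rw [this]; exact Submodule.zero_mem _
  | add a c _ _ ha hc =>
      have : toR (a + c) = toR a + toR c := by funext i; simp [toR]
      rw [this]; exact Submodule.add_mem _ ha hc
  | neg a _ ha =>
      have : toR (-a) = -toR a := by funext i; simp [toR]
      rw [this]; exact Submodule.neg_mem _ ha

lemma pos_and_mem {d : ℕ} {A B C : Finset (Zd d)} (G : Zd d →+ ℤ)
    (hCA : C ⊆ A) (hpos : ∀ a ∈ A, 0 ≤ G a) (hiff : ∀ a ∈ A, G a = 0 ↔ a ∈ B)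
    {v : Zd d} (hv : v ∈ AddSubmonoid.closure (C : Set (Zd d))) :
    0 ≤ G v ∧ (G v = 0 → v ∈ AddSubgroup.closure (B : Set (Zd d))) := by
  induction hv using AddSubmonoid.closure_induction with
  | mem a ha =>
      exact ⟨hpos a (hCA ha),
        fun h => AddSubgroup.subset_closure ((hiff a (hCA ha)).mp h)⟩
  | zero => exact ⟨by simp, fun _ => AddSubgroup.zero_mem _⟩
  | add a c _ _ ha hc =>
      refine ⟨by rw [map_add]; exact add_nonneg ha.1 hc.1, fun h => ?_⟩
      rw [map_add] at h
      have ha1 := ha.1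
      have hc1 := hc.1
      have h1 : G a = 0 := by omega
      have h2 : G c = 0 := by omega
      exact AddSubgroup.add_mem _ (ha.2 h1) (hc.2 h2)

/-- Lemmas 7.5 and 7.6. Let `S = ℕA` with standard expression
`S = S_c \ ⋃ᵢ (bᵢ + ℤ(A∩τᵢ))`, let `τ_m` (index `i0`) have codimension `> 1`, and
let `ρ` be a ray contained in `⋂_{τᵢ ⊋ τ_m, bᵢ−b_m ∈ Kτᵢ} τᵢ` but not in
`τ_m \ {0}`, with `0 ≠ d_ρ ∈ ℕ(A∩ρ)`. Then for all sufficiently large `k`: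
(1) `b_m + k·d_ρ ∈ S + ℤ(A∩τ_m)`; and (2) for every `i` with `τᵢ ⊋ τ_m` and
`bᵢ − b_m ∈ Kτᵢ`, `bᵢ + k·d_ρ ∉ S + ℤ(A∩τᵢ)`. -/
theorem ray_translate_lemmas {d m : ℕ}
    (A : Finset (Zd d)) (Sc : Set (Zd d))
    (b : Fin m → Zd d) (Bf : Fin m → Finset (Zd d))
    (hset : Setting A Sc ((NA A : Set (Zd d))) b Bf)
    (hirr : Irredundant Sc ((NA A : Set (Zd d))) b Bf)
    (i0 : Fin m)
    (hcodim : Module.finrank ℝ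
        ↥(Submodule.span ℝ (toR '' ((Bf i0 : Set (Zd d))))) + 1 < d)
    (Bρ : Finset (Zd d)) (hρ : IsFace A Bρ)
    (hρdim : Module.finrank ℝ ↥(Submodule.span ℝ (toR '' ((Bρ : Set (Zd d))))) = 1)
    (hρsub : ∀ i, Bf i0 ⊂ Bf i →
        toR (b i - b i0) ∈ Submodule.span ℝ (toR '' ((Bf i : Set (Zd d)))) →
        Bρ ⊆ Bf i)
    (dρ : Zd d) (hdρ : dρ ∈ AddSubmonoid.closure ((Bρ : Set (Zd d)))) (hdρ0 : dρ ≠ 0)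
    (hρnot : toR dρ ∉ Submodule.span ℝ (toR '' ((Bf i0 : Set (Zd d))))) :
    ∃ k0 : ℕ, ∀ k : ℕ, k0 ≤ k →
      (b i0 + (k : ℤ) • dρ ∈ plusZ ((NA A : Set (Zd d))) (Bf i0)) ∧
      ∀ i, Bf i0 ⊂ Bf i →
        toR (b i - b i0) ∈ Submodule.span ℝ (toR '' ((Bf i : Set (Zd d)))) →
        b i + (k : ℤ) • dρ ∉ plusZ ((NA A : Set (Zd d))) (Bf i) := by
  classical
  obtain ⟨_, hBρA, _, _⟩ := hρ
  have hdNA : dρ ∈ NA A :=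
    AddSubmonoid.closure_mono (Finset.coe_subset.mpr hBρA) hdρ
  -- get the witness x from irredundancy at i0
  have hsub : (NA A : Set (Zd d)) ⊆ Sc \ ⋃ j, ⋃ (_ : j ≠ i0), coset (b j) (Bf j) := by
    rw [hset.expr]
    intro y hy
    exact ⟨hy.1, fun hmem => hy.2 (by
      obtain ⟨t, ⟨j, rfl⟩, ht⟩ := hmem
      obtain ⟨t', ⟨_, rfl⟩, ht'⟩ := ht
      exact Set.mem_iUnion.mpr ⟨j, ht'⟩)⟩
  obtain ⟨x, hxmem, hxS⟩ :=
    Set.exists_of_ssubset (hsub.ssubset_of_ne (Ne.symm (hirr i0)))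
  have hxSc : x ∈ Sc := hxmem.1
  have hxnotj : ∀ j, j ≠ i0 → x ∉ coset (b j) (Bf j) := by
    intro j hj hc
    exact hxmem.2 (Set.mem_iUnion.mpr ⟨j, Set.mem_iUnion.mpr ⟨hj, hc⟩⟩)
  have hx0 : x ∈ coset (b i0) (Bf i0) := by
    have hx' : x ∈ ⋃ j, coset (b j) (Bf j) := by
      by_contra hcon
      exact hxS (by rw [hset.expr]; exact ⟨hxSc, hcon⟩)
    obtain ⟨t, ⟨j, rfl⟩, hj⟩ := hx'
    rcases eq_or_ne j i0 with rfl | hne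
    · exact hj
    · exact absurd hj (hxnotj j hne)
  -- key: each coset captures x + k•dρ for at most one k
  have key : ∀ j, ∀ k k' : ℕ, x + (k : ℤ) • dρ ∈ coset (b j) (Bf j) →
      x + (k' : ℤ) • dρ ∈ coset (b j) (Bf j) → k = k' := by
    intro j k k' h h'
    by_contra hne
    obtain ⟨G, hBA, hGpos, hGiff⟩ := hset.face j
    have hker : ∀ v ∈ AddSubgroup.closure ((Bf j : Set (Zd d))), G v = 0 := by
      intro v hv
      induction hv using AddSubgroup.closure_induction with
      | mem a ha => exact (hGiff a (hBA ha)).mpr ha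
      | zero => simp
      | add a c _ _ ha hc => rw [map_add, ha, hc]; ring
      | neg a _ ha => rw [map_neg, ha]; ring
    have h1 : x + (k : ℤ) • dρ - b j ∈ AddSubgroup.closure ((Bf j : Set (Zd d))) := h
    have h2 : x + (k' : ℤ) • dρ - b j ∈ AddSubgroup.closure ((Bf j : Set (Zd d))) := h'
    have hd1 : ((k : ℤ) - (k' : ℤ)) • dρ ∈ AddSubgroup.closure ((Bf j : Set (Zd d))) := by
      have := AddSubgroup.sub_mem _ h1 h2
      have e : (x + (k : ℤ) • dρ - b j) - (x + (k' : ℤ) • dρ - b j)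
          = ((k : ℤ) - (k' : ℤ)) • dρ := by
        rw [sub_smul]; abel
      rwa [e] at this
    have hz : ((k : ℤ) - (k' : ℤ)) * G dρ = 0 := by
      have := hker _ hd1
      rwa [map_zsmul, smul_eq_mul] at this
    have hGd : G dρ = 0 := by
      rcases mul_eq_zero.mp hz with h0 | h0
      · exfalso
        have : (k : ℤ) ≠ (k' : ℤ) := by exact_mod_cast hne
        exact this (by linarith [sub_eq_zero.mp h0])
      · exact h0
    have hdmem : dρ ∈ AddSubgroup.closure ((Bf j : Set (Zd d))) :=
      (pos_and_mem G hBρA hGpos hGiff hdρ).2 hGd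
    have hxj : x ∈ coset (b j) (Bf j) := by
      have h3 := AddSubgroup.sub_mem _ h1 (AddSubgroup.zsmul_mem _ hdmem (k : ℤ))
      have e : (x + (k : ℤ) • dρ - b j) - (k : ℤ) • dρ = x - b j := by abel
      rw [e] at h3
      exact h3
    rcases eq_or_ne j i0 with rfl | hne'
    · exact hρnot (toR_mem_span hdmem)
    · exact hxnotj j hne' hxj
  -- bound
  set f : Fin m → ℕ := fun j =>
    if h : ∃ k : ℕ, x + (k : ℤ) • dρ ∈ coset (b j) (Bf j) then h.choose else 0 with hf
  refine ⟨(Finset.univ.sup f) + 1, fun k hk => ⟨?_, ?_⟩⟩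
  · -- part (1)
    have hxk : x + (k : ℤ) • dρ ∈ (NA A : Set (Zd d)) := by
      rw [hset.expr]
      constructor
      · have : (k : ℤ) • dρ ∈ NA A := by
          rw [natCast_zsmul]
          exact AddSubmonoid.nsmul_mem _ hdNA k
        exact hset.fg.1 x hxSc _ this
      · intro hmem
        obtain ⟨t, ⟨j, rfl⟩, hj⟩ := hmem
        have hex : ∃ k : ℕ, x + (k : ℤ) • dρ ∈ coset (b j) (Bf j) := ⟨k, hj⟩
        have hkf : k = f j := by
          rw [hf]; simp only [dif_pos hex]
          exact key j k hex.choose hj hex.choose_spec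
        have : f j ≤ Finset.univ.sup f := Finset.le_sup (Finset.mem_univ j)
        omega
    have hneg : -(x - b i0) ∈ AddSubgroup.closure ((Bf i0 : Set (Zd d))) :=
      AddSubgroup.neg_mem _ hx0
    rw [neg_sub] at hneg
    exact ⟨x + (k : ℤ) • dρ, hxk, b i0 - x, hneg, by abel⟩
  · -- part (2)
    intro i hss hspan hmem
    obtain ⟨s, hs, z, hz, heq⟩ := hmem
    have hBρi : Bρ ⊆ Bf i := hρsub i hss hspan
    have hdz : dρ ∈ AddSubgroup.closure ((Bf i : Set (Zd d))) := by
      have : AddSubmonoid.closure ((Bρ : Set (Zd d))) ≤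
          (AddSubgroup.closure ((Bf i : Set (Zd d)))).toAddSubmonoid := by
        rw [AddSubmonoid.closure_le]
        intro a ha
        exact AddSubgroup.subset_closure (hBρi ha)
      exact this hdρ
    have hscos : s ∈ coset (b i) (Bf i) := by
      have e : s = b i + (k : ℤ) • dρ - z := by rw [heq]; abel
      show s - b i ∈ AddSubgroup.closure ((Bf i : Set (Zd d)))
      rw [e]
      have e2 : b i + (k : ℤ) • dρ - z - b i = (k : ℤ) • dρ - z := by abel
      rw [e2]
      exact AddSubgroup.sub_mem _ (AddSubgroup.zsmul_mem _ hdz _) hz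
    rw [hset.expr] at hs
    exact hs.2 (Set.mem_iUnion.mpr ⟨i, hscos⟩)

end SaitoTakahashi
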